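/- arXiv:2008.03399 — 2 statements merged into one kernel-verified Lean document; each statement's English description precedes it below -/
import Mathlib

section
/- Let X be an n×d complex matrix with rows x_1, …, x_n ∈ ℂ^d, let W = X Xᵀ (transpose without conjugation), let c be a cluster assignment of the n points into K clusters in which every cluster is nonempty, let μ_k = (1/n_k) Σ_{i : c(i)=k} x_i, and let H̃ be the normalized indicator matrix of c. Then the complex bilinear kernel K-means objective satisfies Σ_{i=1}^{n} Σ_{t=1}^{d} (x_{i,t} − μ_{c(i),t})² = tr(W) − tr(H̃ᵀ W H̃), an identity of complex numbers. -/
/-!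
Both sides split over the clusters. Expanding the square, which uses only the ring structure
and so holds for the bilinear form over `ℂ`, the scatter of cluster `k` about its centroid is
`Σ_{c i = k} x_{i,t}² − S_{k,t}² / n_k` in each coordinate `t`, where
`S_{k,t} = Σ_{c i = k} x_{i,t}`.
On the other side `tr W = Σ_{i,t} x_{i,t}²`, and `H̃ᵀ W H̃ = (H̃ᵀ X)(H̃ᵀ X)ᵀ` with
`(H̃ᵀ X)_{k,t} = S_{k,t} / √n_k`, so `tr (H̃ᵀ W H̃) = Σ_{k,t} S_{k,t}² / n_k`.
-/

open Matrix Finset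

theorem Finset.sum_sub_mean_sq {ι 𝕜 : Type*} [Field 𝕜] [CharZero 𝕜] (s : Finset ι)
    (x : ι → 𝕜) :
    ∑ i ∈ s, (x i - (∑ j ∈ s, x j) / #s) ^ 2 =
      ∑ i ∈ s, x i ^ 2 - (∑ i ∈ s, x i) ^ 2 / #s := by
  rcases s.eq_empty_or_nonempty with rfl | hs
  · simp
  have hcard : (#s : 𝕜) ≠ 0 := Nat.cast_ne_zero.mpr hs.card_pos.ne'
  generalize hS : ∑ j ∈ s, x j = S
  have hexpand : ∑ i ∈ s, (x i - S / #s) ^ 2 =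
      ∑ i ∈ s, x i ^ 2 - 2 * (S / #s) * S + #s * (S / #s) ^ 2 := by
    simp_rw [sub_sq, sum_add_distrib, sum_sub_distrib, ← sum_mul, ← mul_sum, hS, sum_const,
      nsmul_eq_mul]
    ring
  rw [hexpand]
  field_simp
  ring

theorem sum_sq_sub_cluster_mean {ι κ n 𝕜 : Type*} [Fintype ι] [Fintype κ] [DecidableEq κ]
    [Fintype n] [Field 𝕜] [CharZero 𝕜] (X : Matrix ι n 𝕜) (c : ι → κ) :
    ∑ i, ∑ t, (X i t - (∑ j with c j = c i, X j t) / #{j | c j = c i}) ^ 2 =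
      ∑ i, ∑ t, X i t ^ 2 - ∑ k, ∑ t, (∑ i with c i = k, X i t) ^ 2 / #{i | c i = k} := by
  rw [← sum_fiberwise univ c, ← sum_fiberwise univ c (fun i => ∑ t, X i t ^ 2),
    ← sum_sub_distrib]
  refine sum_congr rfl fun k _ => ?_
  calc ∑ i with c i = k, ∑ t, (X i t - (∑ j with c j = c i, X j t) / #{j | c j = c i}) ^ 2
      = ∑ i with c i = k, ∑ t, (X i t - (∑ j with c j = k, X j t) / #{j | c j = k}) ^ 2 :=
        sum_congr rfl fun i hi => by rw [(mem_filter.1 hi).2]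
    _ = ∑ t, ∑ i with c i = k, (X i t - (∑ j with c j = k, X j t) / #{j | c j = k}) ^ 2 :=
        sum_comm
    _ = ∑ t, (∑ i with c i = k, X i t ^ 2 - (∑ i with c i = k, X i t) ^ 2 / #{i | c i = k}) :=
        sum_congr rfl fun t _ => sum_sub_mean_sq _ _
    _ = _ := by rw [sum_sub_distrib, sum_comm]

theorem Matrix.trace_mul_transpose_self {m n R : Type*} [Fintype m] [Fintype n] [Semiring R]
    (A : Matrix m n R) : (A * Aᵀ).trace = ∑ i, ∑ j, A i j ^ 2 := by
  simp [trace, mul_apply, sq]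

theorem Matrix.transpose_mul_apply_of_eq_ite {m n κ R : Type*} [Fintype m] [DecidableEq κ]
    [NonUnitalNonAssocSemiring R] (c : m → κ) (a : κ → R) (H : Matrix m κ R)
    (hH : ∀ i k, H i k = if c i = k then a k else 0) (X : Matrix m n R) (k : κ) (t : n) :
    (Hᵀ * X) k t = a k * ∑ i with c i = k, X i t := by
  simp [mul_apply, hH, mul_sum, sum_filter, ite_mul]

theorem complex_bilinear_kernel_kmeans_trace_general
    {n K d : ℕ} (X : Matrix (Fin n) (Fin d) ℂ) (c : Fin n → Fin K)
    (W : Matrix (Fin n) (Fin n) ℂ) (hW : W = X * Xᵀ)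
    (μ : Fin K → Fin d → ℂ)
    (hμ : ∀ k, μ k = (((Finset.univ.filter (fun i => c i = k)).card : ℂ))⁻¹ •
      ∑ i ∈ Finset.univ.filter (fun i => c i = k), X i)
    (Ht : Matrix (Fin n) (Fin K) ℂ)
    (hHt : ∀ i k, Ht i k =
      if c i = k then ((Real.sqrt ((Finset.univ.filter (fun j => c j = k)).card) : ℝ) : ℂ)⁻¹
      else 0) :
    ∑ i, ∑ t, (X i t - μ (c i) t) ^ 2 = W.trace - (Htᵀ * W * Ht).trace := by
  subst hW
  have hGram : Htᵀ * (X * Xᵀ) * Ht = (Htᵀ * X) * (Htᵀ * X)ᵀ := by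
    simp only [transpose_mul, transpose_transpose, Matrix.mul_assoc]
  have hμ_apply :
      ∀ i t, μ (c i) t = (#{j | c j = c i} : ℂ)⁻¹ * ∑ j with c j = c i, X j t := by
    intro i t
    rw [hμ, Pi.smul_apply, smul_eq_mul]
    exact congrArg _ (Finset.sum_apply _ _ _)
  have hinv_sqrt_sq : ∀ m : ℕ, ((Real.sqrt m : ℂ)⁻¹) ^ 2 = (m : ℂ)⁻¹ := fun m => by
    rw [inv_pow, ← Complex.ofReal_pow, Real.sq_sqrt m.cast_nonneg, Complex.ofReal_natCast]
  rw [hGram, trace_mul_transpose_self, trace_mul_transpose_self]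
  simp_rw [hμ_apply, transpose_mul_apply_of_eq_ite c _ Ht hHt, mul_pow, hinv_sqrt_sq,
    inv_mul_eq_div]
  exact sum_sq_sub_cluster_mean X c

/-- Complex bilinear kernel K-means identity: for an `n × d` complex matrix `X`
with rows `x_i`, `W = X Xᵀ` (transpose without conjugation), a cluster assignment
`c` into `K` nonempty clusters with (complex) centroids `μ_k`, and the normalized
indicator matrix `H̃` viewed as a complex matrix, we have the identity of complex
numbers `Σ_i Σ_t (x_{i,t} − μ_{c i, t})² = tr(W) − tr(H̃ᵀ W H̃)`. -/
theorem complex_bilinear_kernel_kmeans_trace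
    {n K d : ℕ} (X : Matrix (Fin n) (Fin d) ℂ) (c : Fin n → Fin K)
    (hne : ∀ k, 1 ≤ (Finset.univ.filter (fun i => c i = k)).card)
    (W : Matrix (Fin n) (Fin n) ℂ) (hW : W = X * Xᵀ)
    (μ : Fin K → Fin d → ℂ)
    (hμ : ∀ k, μ k = (((Finset.univ.filter (fun i => c i = k)).card : ℂ))⁻¹ •
      ∑ i ∈ Finset.univ.filter (fun i => c i = k), X i)
    (Ht : Matrix (Fin n) (Fin K) ℂ)
    (hHt : ∀ i k, Ht i k =
      if c i = k then ((Real.sqrt ((Finset.univ.filter (fun j => c j = k)).card) : ℝ) : ℂ)⁻¹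
      else 0) :
    ∑ i, ∑ t, (X i t - μ (c i) t) ^ 2 = W.trace - (Htᵀ * W * Ht).trace :=
  complex_bilinear_kernel_kmeans_trace_general X c W hW μ hμ Ht hHt
end

section
/- Let x_1, …, x_n ∈ ℂ^d, let K_gram be the n×n Gram matrix with (K_gram)_{ij} = ⟨x_i, x_j⟩, and for a cluster assignment c into K nonempty clusters let J(c) = Σ_i ‖x_i − μ_{c(i)}‖² be the kernel K-means objective and H̃(c) the normalized indicator matrix. Then for any two cluster assignments c and c' into K nonempty clusters: J(c) ≤ J(c') if and only if Re tr(H̃(c')ᵀ K_gram H̃(c')) ≤ Re tr(H̃(c)ᵀ K_gram H̃(c)). In particular, c minimizes the kernel K-means objective over all assignments into K nonempty clusters if and only if c maximizes tr(H̃ᵀ K_gram H̃). -/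
/-!
Writing `S_k` for the sum of the points of cluster `k`, expanding the squares gives
`J(c) = ∑ᵢ ‖xᵢ‖² - ∑ₖ ‖S_k‖² / n_k`, while the `k`-th diagonal entry of `H̃ᵀ K_gram H̃` is
`⟪S_k / √n_k, S_k / √n_k⟫ = ‖S_k‖² / n_k`. So `J` and the trace differ by the constant
`∑ᵢ ‖xᵢ‖²` up to sign, and the order of one is the reverse order of the other.
-/

open Matrix

/-- The size of cluster `k` under the assignment `c`. -/
def clusterSize {n K : ℕ} (c : Fin n → Fin K) (k : Fin K) : ℕ :=
  (Finset.univ.filter (fun i => c i = k)).card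

/-- The centroid of cluster `k`. -/
noncomputable def centroid {n K d : ℕ} (x : Fin n → EuclideanSpace ℂ (Fin d))
    (c : Fin n → Fin K) (k : Fin K) : EuclideanSpace ℂ (Fin d) :=
  ((clusterSize c k : ℂ))⁻¹ • ∑ i ∈ Finset.univ.filter (fun i => c i = k), x i

/-- The kernel K-means objective `J(c) = Σ_i ‖x_i − μ_{c i}‖²`. -/
noncomputable def kmeansObj {n K d : ℕ} (x : Fin n → EuclideanSpace ℂ (Fin d))
    (c : Fin n → Fin K) : ℝ :=
  ∑ i, ‖x i - centroid x c (c i)‖ ^ 2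

/-- The normalized indicator matrix of `c`, viewed as a complex matrix. -/
noncomputable def normIndicator {n K : ℕ} (c : Fin n → Fin K) :
    Matrix (Fin n) (Fin K) ℂ :=
  fun i k => if c i = k then ((Real.sqrt (clusterSize c k) : ℝ) : ℂ)⁻¹ else 0

/-- The Gram matrix `K_gram i j = ⟨x i, x j⟩`. -/
noncomputable def gramMatrix {n d : ℕ} (x : Fin n → EuclideanSpace ℂ (Fin d)) :
    Matrix (Fin n) (Fin n) ℂ :=
  fun i j => inner ℂ (x i) (x j)

open Finset
open scoped InnerProductSpace

noncomputable def clusterSum {n K d : ℕ} (x : Fin n → EuclideanSpace ℂ (Fin d))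
    (c : Fin n → Fin K) (k : Fin K) : EuclideanSpace ℂ (Fin d) :=
  ∑ i ∈ univ.filter (fun i => c i = k), x i

theorem sum_norm_sub_centroid_sq {𝕜 E ι : Type*} [RCLike 𝕜] [NormedAddCommGroup E]
    [InnerProductSpace 𝕜 E] (s : Finset ι) (x : ι → E) :
    ∑ i ∈ s, ‖x i - (#s : 𝕜)⁻¹ • ∑ j ∈ s, x j‖ ^ 2 =
      ∑ i ∈ s, ‖x i‖ ^ 2 - ‖∑ i ∈ s, x i‖ ^ 2 / #s := by
  set S := ∑ j ∈ s, x j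
  have h_inner : ∑ i ∈ s, RCLike.re ⟪x i, (#s : 𝕜)⁻¹ • S⟫_𝕜 = (#s : ℝ)⁻¹ * ‖S‖ ^ 2 := by
    rw [← map_sum, ← sum_inner, inner_smul_right, inner_self_eq_norm_sq_to_K,
      ← RCLike.ofReal_natCast, ← RCLike.ofReal_inv, ← RCLike.ofReal_pow, ← RCLike.ofReal_mul,
      RCLike.ofReal_re]
  have h_norm : ‖(#s : 𝕜)⁻¹ • S‖ ^ 2 = (#s : ℝ)⁻¹ ^ 2 * ‖S‖ ^ 2 := by
    rw [norm_smul, norm_inv, RCLike.norm_natCast, mul_pow]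
  simp_rw [norm_sub_sq (𝕜 := 𝕜)]
  rw [sum_add_distrib, sum_sub_distrib, ← mul_sum, h_inner, sum_const, nsmul_eq_mul, h_norm]
  rcases (#s).eq_zero_or_pos with h | h
  · simp [h]
  · field_simp
    ring

theorem transpose_mul_gramMatrix_mul_apply {n d : ℕ} {ι : Type*}
    (x : Fin n → EuclideanSpace ℂ (Fin d)) (H : Matrix (Fin n) ι ℂ) (k l : ι) :
    (Hᵀ * gramMatrix x * H) k l = ⟪∑ i, star (H i k) • x i, ∑ j, H j l • x j⟫_ℂ := by
  simp only [mul_apply, transpose_apply, gramMatrix, sum_inner, inner_sum, inner_smul_left,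
    inner_smul_right, sum_mul, mul_sum]
  refine sum_congr rfl fun j _ => sum_congr rfl fun i _ => ?_
  rw [starRingEnd_apply, star_star]
  ring

theorem kmeansObj_eq {n K d : ℕ} (x : Fin n → EuclideanSpace ℂ (Fin d)) (c : Fin n → Fin K) :
    kmeansObj x c = ∑ i, ‖x i‖ ^ 2 - ∑ k, ‖clusterSum x c k‖ ^ 2 / clusterSize c k := by
  rw [kmeansObj, ← sum_fiberwise univ c, ← sum_fiberwise univ c (fun i => ‖x i‖ ^ 2),
    ← sum_sub_distrib]
  refine sum_congr rfl fun k _ => ?_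
  rw [sum_congr rfl fun i hi => by rw [(mem_filter.1 hi).2]]
  exact sum_norm_sub_centroid_sq _ _

theorem star_normIndicator {n K : ℕ} (c : Fin n → Fin K) (i : Fin n) (k : Fin K) :
    star (normIndicator c i k) = normIndicator c i k := by
  unfold normIndicator
  split_ifs <;> simp

theorem sum_normIndicator_smul {n K d : ℕ} (x : Fin n → EuclideanSpace ℂ (Fin d))
    (c : Fin n → Fin K) (k : Fin K) :
    ∑ i, normIndicator c i k • x i = ((√(clusterSize c k) : ℝ) : ℂ)⁻¹ • clusterSum x c k := by
  rw [clusterSum, smul_sum, sum_filter]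
  refine sum_congr rfl fun i _ => ?_
  unfold normIndicator
  split_ifs <;> simp_all

theorem re_trace_normIndicator {n K d : ℕ} (x : Fin n → EuclideanSpace ℂ (Fin d))
    (c : Fin n → Fin K) :
    ((normIndicator c)ᵀ * gramMatrix x * normIndicator c).trace.re =
      ∑ k, ‖clusterSum x c k‖ ^ 2 / clusterSize c k := by
  rw [trace, Complex.re_sum]
  refine sum_congr rfl fun k _ => ?_
  rw [diag_apply, transpose_mul_gramMatrix_mul_apply]
  simp_rw [star_normIndicator]
  rw [sum_normIndicator_smul, inner_self_eq_norm_sq_to_K, ← RCLike.ofReal_pow,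
    RCLike.re_to_complex.symm, RCLike.ofReal_re,
    norm_smul, norm_inv, Complex.norm_real, Real.norm_of_nonneg (Real.sqrt_nonneg _), mul_pow,
    inv_pow, Real.sq_sqrt (Nat.cast_nonneg _)]
  ring

theorem kmeansObj_le_iff {n K d : ℕ} (x : Fin n → EuclideanSpace ℂ (Fin d))
    (c c' : Fin n → Fin K) :
    kmeansObj x c ≤ kmeansObj x c' ↔
      ((normIndicator c')ᵀ * gramMatrix x * normIndicator c').trace.re ≤
        ((normIndicator c)ᵀ * gramMatrix x * normIndicator c).trace.re := by
  rw [kmeansObj_eq, kmeansObj_eq, re_trace_normIndicator, re_trace_normIndicator]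
  exact sub_le_sub_iff_left _

theorem kmeans_min_iff_trace_max_general
    {n K d : ℕ} (x : Fin n → EuclideanSpace ℂ (Fin d))
    (c c' : Fin n → Fin K) :
    (kmeansObj x c ≤ kmeansObj x c' ↔
      ((normIndicator c')ᵀ * gramMatrix x * normIndicator c').trace.re ≤
        ((normIndicator c)ᵀ * gramMatrix x * normIndicator c).trace.re) ∧
    ((∀ c'' : Fin n → Fin K, (∀ k, 1 ≤ clusterSize c'' k) →
        kmeansObj x c ≤ kmeansObj x c'') ↔
      (∀ c'' : Fin n → Fin K, (∀ k, 1 ≤ clusterSize c'' k) →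
        ((normIndicator c'')ᵀ * gramMatrix x * normIndicator c'').trace.re ≤
          ((normIndicator c)ᵀ * gramMatrix x * normIndicator c).trace.re)) :=
  ⟨kmeansObj_le_iff x c c',
    forall_congr' fun c'' => imp_congr_right fun _ => kmeansObj_le_iff x c c''⟩

/-- Minimizing the kernel K-means objective is equivalent to maximizing
`tr(H̃ᵀ K_gram H̃)`: for any two assignments `c, c'` into `K` nonempty clusters,
`J(c) ≤ J(c')` iff `Re tr(H̃(c')ᵀ K_gram H̃(c')) ≤ Re tr(H̃(c)ᵀ K_gram H̃(c))`;
in particular `c` minimizes `J` iff `c` maximizes the trace. -/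
theorem kmeans_min_iff_trace_max
    {n K d : ℕ} (x : Fin n → EuclideanSpace ℂ (Fin d))
    (c c' : Fin n → Fin K)
    (hc : ∀ k, 1 ≤ clusterSize c k) (hc' : ∀ k, 1 ≤ clusterSize c' k) :
    (kmeansObj x c ≤ kmeansObj x c' ↔
      ((normIndicator c')ᵀ * gramMatrix x * normIndicator c').trace.re ≤
        ((normIndicator c)ᵀ * gramMatrix x * normIndicator c).trace.re) ∧
    ((∀ c'' : Fin n → Fin K, (∀ k, 1 ≤ clusterSize c'' k) →
        kmeansObj x c ≤ kmeansObj x c'') ↔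
      (∀ c'' : Fin n → Fin K, (∀ k, 1 ≤ clusterSize c'' k) →
        ((normIndicator c'')ᵀ * gramMatrix x * normIndicator c'').trace.re ≤
          ((normIndicator c)ᵀ * gramMatrix x * normIndicator c).trace.re)) :=
  kmeans_min_iff_trace_max_general x c c'
end
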